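/- In the D⁻-module ℂ[t,t⁻¹], the subspace ℂ[t] is a D⁻-submodule which is irreducible as a D⁻-module, and it is the maximal proper submodule: every D⁻-submodule of ℂ[t,t⁻¹] other than ℂ[t,t⁻¹] itself is contained in ℂ[t]. -/

import Mathlib

open Filter Module

noncomputable section

/-! ## The Lie algebra `D⁻` of regular differential operators on `ℂ`

The space `ℂ[t,t⁻¹]` of Laurent polynomials is realized as the space `LP = ℤ →₀ ℂ`
of finitely supported functions, `Finsupp.single n 1` playing the role of `tⁿ`. -/

abbrev LP : Type := ℤ →₀ ℂ

/-- Multiplication by `t` : `tⁿ ↦ tⁿ⁺¹`. -/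
def tM : Module.End ℂ LP := Finsupp.lsum ℂ fun n => Finsupp.lsingle (n + 1)

/-- The derivative `d/dt` : `tⁿ ↦ n tⁿ⁻¹`. -/
def ddt : Module.End ℂ LP := Finsupp.lsum ℂ fun n => (n : ℂ) • Finsupp.lsingle (n - 1)

/-- `D = t d/dt`. -/
def Dop : Module.End ℂ LP := tM * ddt

/-- `D⁻`, the Lie algebra of regular differential operators on `ℂ`: the span, inside
`End ℂ (ℂ[t,t⁻¹])`, of the operators `f(t) (d/dt)^m` with `f ∈ ℂ[t]`, `m ∈ ℤ₊`. -/
def Dminus : Submodule ℂ (Module.End ℂ LP) :=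
  Submodule.span ℂ {A | ∃ (k m : ℕ), A = tM ^ k * ddt ^ m}

/-- The subspace `ℂ[t] ⊆ ℂ[t,t⁻¹]`. -/
def polyPart : Submodule ℂ LP := Finsupp.supported ℂ ℂ (Set.Ici (0 : ℤ))

/-- Operators homogeneous of degree `j` for the principal gradation (`deg t = -1`,
`deg d/dt = 1`): those `A` with `A(tⁿ) ∈ ℂ · tⁿ⁻ʲ` for all `n ∈ ℤ`. -/
def homogDeg (j : ℤ) : Submodule ℂ (Module.End ℂ LP) where
  carrier := {A | ∀ n : ℤ, A (Finsupp.single n 1) ∈ (ℂ ∙ (Finsupp.single (n - j) 1 : LP))}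
  add_mem' := by
    intro A B hA hB n
    rw [LinearMap.add_apply]
    exact Submodule.add_mem _ (hA n) (hB n)
  zero_mem' := by
    intro n
    rw [LinearMap.zero_apply]
    exact Submodule.zero_mem _
  smul_mem' := by
    intro c A hA n
    rw [LinearMap.smul_apply]
    exact Submodule.smul_mem _ _ (hA n)

/-- The degree `j` piece `D⁻_j` of the principal `ℤ`-gradation of `D⁻`. -/
def DminusG (j : ℤ) : Submodule ℂ (Module.End ℂ LP) := Dminus ⊓ homogDeg j

/-! ## Representations -/

/-- A representation on `M` of a set `S` of operators (a Lie subalgebra of `End ℂ V`),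
encoded as a function `ρ` defined on all of `End ℂ V` which is linear and bracket-preserving
on members of `S` (its values outside `S` are irrelevant). -/
def IsRepOn {V M : Type*} [AddCommGroup V] [Module ℂ V] [AddCommGroup M] [Module ℂ M]
    (S : Set (Module.End ℂ V)) (ρ : Module.End ℂ V → Module.End ℂ M) : Prop :=
  (∀ A ∈ S, ∀ B ∈ S, ρ (A + B) = ρ A + ρ B) ∧
  (∀ (c : ℂ), ∀ A ∈ S, ρ (c • A) = c • ρ A) ∧
  (∀ A ∈ S, ∀ B ∈ S, ρ ⁅A, B⁆ = ⁅ρ A, ρ B⁆)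

/-- `W` is a submodule for the action `ρ` of `S`. -/
def ActInvariant {V M : Type*} [AddCommGroup V] [Module ℂ V] [AddCommGroup M] [Module ℂ M]
    (S : Set (Module.End ℂ V)) (ρ : Module.End ℂ V → Module.End ℂ M)
    (W : Submodule ℂ M) : Prop :=
  ∀ A ∈ S, W.map (ρ A) ≤ W

/-- The module `M` is irreducible under the action `ρ` of `S`. -/
def IsIrreducibleOn {V M : Type*} [AddCommGroup V] [Module ℂ V] [AddCommGroup M] [Module ℂ M]
    (S : Set (Module.End ℂ V)) (ρ : Module.End ℂ V → Module.End ℂ M) : Prop :=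
  Nontrivial M ∧ ∀ W : Submodule ℂ M, ActInvariant S ρ W → W = ⊥ ∨ W = ⊤

/-! ## Growth -/

/-- The growth of a `ℤ₊`-graded vector space (graded pieces `L j`, `j ≥ 0`), computed from the
filtration by the subspaces `⨁_{i ≤ j} L i`:  `limsup_{j → ∞} log dim (⨁_{i ≤ j} L i) / log j`,
as an extended real number. -/
def gradedGrowth {M : Type*} [AddCommGroup M] [Module ℂ M] (L : ℤ → Submodule ℂ M) : EReal :=
  limsup (fun j : ℕ =>
    ((Real.log (Module.finrank ℂ ↥(⨆ i ∈ Finset.range (j + 1), L (i : ℤ))) /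
      Real.log j : ℝ) : EReal)) atTop

/-!
On monomials, `(d/dt)^m tⁿ = n (n-1) ⋯ (n-m+1) tⁿ⁻ᵐ`, and this falling factorial vanishes exactly
when `0 ≤ n < m`. Hence `ℂ[t]` is stable under `D⁻`, and for a submodule `W`:
* if `0 ≠ w ∈ W ⊆ ℂ[t]` has degree `N`, then `(d/dt)^N w` is a nonzero multiple of `1`;
* if `w ∈ W` has lowest exponent `μ < 0`, then `(d/dt)^m t^(-1-μ) w` is a nonzero multiple
  of `t^(-1-m)` for every large `m`.
Multiplying by powers of `t` then produces all of `ℂ[t]`, resp. all of `ℂ[t,t⁻¹]`.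
-/

open Polynomial Finsupp

theorem descPochhammer_eval_intCast_eq_zero_iff {R : Type*} [CommRing R] [IsDomain R]
    [CharZero R] (m : ℕ) (n : ℤ) :
    (descPochhammer R m).eval (n : R) = 0 ↔ 0 ≤ n ∧ n < m := by
  simp only [descPochhammer_eval_eq_prod_range, Finset.prod_eq_zero_iff, Finset.mem_range,
    sub_eq_zero]
  constructor
  · rintro ⟨i, hi, hn⟩
    have : n = i := by exact_mod_cast hn
    omega
  · rintro ⟨h0, hm⟩
    exact ⟨n.toNat, by omega, by exact_mod_cast (Int.toNat_of_nonneg h0).symm⟩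

theorem tM_pow_single (k : ℕ) (n : ℤ) (c : ℂ) : (tM ^ k) (single n c) = single (n + k) c := by
  induction k with
  | zero => simp
  | succ k ih =>
    rw [pow_succ', Module.End.mul_apply, ih, tM, lsum_single, lsingle_apply]
    congr 1
    push_cast
    ring

theorem ddt_single (n : ℤ) (c : ℂ) : ddt (single n c) = single (n - 1) ((n : ℂ) * c) := by
  rw [ddt, lsum_single, LinearMap.smul_apply, lsingle_apply, smul_single, smul_eq_mul]

theorem ddt_pow_single (m : ℕ) (n : ℤ) (c : ℂ) :
    (ddt ^ m) (single n c) = single (n - m) ((descPochhammer ℂ m).eval (n : ℂ) * c) := by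
  induction m generalizing n c with
  | zero => simp
  | succ m ih =>
    rw [pow_succ, Module.End.mul_apply, ddt_single, ih, descPochhammer_succ_left]
    simp only [eval_mul, eval_X, eval_comp, eval_sub, eval_one]
    congr 1 <;> push_cast <;> ring

theorem tM_pow_apply (k : ℕ) (w : LP) (r : ℤ) : (tM ^ k) w r = w (r - k) := by
  induction w using Finsupp.induction_linear with
  | zero => simp
  | add f g hf hg => rw [map_add, Finsupp.add_apply, Finsupp.add_apply, hf, hg]
  | single n c =>
    rw [tM_pow_single, single_apply, single_apply]
    exact if_congr (by omega) rfl rfl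

theorem tM_pow_mul_ddt_pow_mem_Dminus (k m : ℕ) : tM ^ k * ddt ^ m ∈ Dminus :=
  Submodule.subset_span ⟨k, m, rfl⟩

theorem supported_le_of_forall_single_one_mem {s : Set ℤ} {W : Submodule ℂ LP}
    (h : ∀ n ∈ s, single n (1 : ℂ) ∈ W) : supported ℂ ℂ s ≤ W :=
  (supported_eq_span_single ℂ s).trans_le (Submodule.span_le.2 (Set.image_subset_iff.2 h))

theorem Dminus_le_compatibleMaps_polyPart : Dminus ≤ polyPart.compatibleMaps polyPart := by
  refine Submodule.span_le.2 ?_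
  rintro _ ⟨k, m, rfl⟩
  change polyPart ≤ polyPart.comap _
  refine supported_le_of_forall_single_one_mem fun n (hn : 0 ≤ n) => ?_
  rw [Submodule.mem_comap, Module.End.mul_apply, ddt_pow_single, tM_pow_single]
  by_cases hnm : n < m
  · rw [(descPochhammer_eval_intCast_eq_zero_iff m n).2 ⟨hn, hnm⟩, zero_mul, single_zero]
    exact zero_mem _
  · exact single_mem_supported ℂ (M := ℂ) _ (Set.mem_Ici.2 (by omega))

section Invariant

variable {W : Submodule ℂ LP} (hW : ∀ A ∈ Dminus, W.map A ≤ W)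
include hW

theorem apply_mem_of_mem_Dminus {A : Module.End ℂ LP} (hA : A ∈ Dminus) {x : LP} (hx : x ∈ W) :
    A x ∈ W :=
  hW A hA (Submodule.mem_map_of_mem hx)

theorem tM_pow_mem (k : ℕ) {x : LP} (hx : x ∈ W) : (tM ^ k) x ∈ W := by
  simpa using apply_mem_of_mem_Dminus hW (tM_pow_mul_ddt_pow_mem_Dminus k 0) hx

theorem ddt_pow_mem (m : ℕ) {x : LP} (hx : x ∈ W) : (ddt ^ m) x ∈ W := by
  simpa using apply_mem_of_mem_Dminus hW (tM_pow_mul_ddt_pow_mem_Dminus 0 m) hx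

theorem single_one_mem_of_le {a b : ℤ} (ha : single a (1 : ℂ) ∈ W) (hab : a ≤ b) :
    single b (1 : ℂ) ∈ W := by
  have := tM_pow_mem hW (b - a).toNat ha
  rwa [tM_pow_single, Int.toNat_of_nonneg (by omega), add_sub_cancel] at this

theorem single_one_mem_of_ddt_pow {w : LP} (hw : w ∈ W) {n : ℤ} {m : ℕ}
    (hsupp : ∀ j ∈ w.support, j ≠ n → 0 ≤ j ∧ j < m) (hn : w n ≠ 0)
    (hP : (descPochhammer ℂ m).eval (n : ℂ) ≠ 0) : single (n - m) (1 : ℂ) ∈ W := by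
  have hdiff : (ddt ^ m) w = single (n - m) ((descPochhammer ℂ m).eval (n : ℂ) * w n) := by
    conv_lhs => rw [← w.sum_single]
    rw [map_finsuppSum, Finsupp.sum_eq_single n _ (by simp)]
    · exact ddt_pow_single m n (w n)
    · intro j hj hjn
      rw [ddt_pow_single, (descPochhammer_eval_intCast_eq_zero_iff m j).2
        (hsupp j (Finsupp.mem_support_iff.2 hj) hjn), zero_mul, single_zero]
  have := W.smul_mem ((descPochhammer ℂ m).eval (n : ℂ) * w n)⁻¹ (ddt_pow_mem hW m hw)
  rwa [hdiff, smul_single, smul_eq_mul, inv_mul_cancel₀ (mul_ne_zero hP hn)] at this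

theorem polyPart_le_of_le_polyPart_of_ne_bot (hle : W ≤ polyPart) (hne : W ≠ ⊥) :
    polyPart ≤ W := by
  obtain ⟨w, hw, hw0⟩ := (Submodule.ne_bot_iff W).1 hne
  have hnonneg : ∀ j ∈ w.support, 0 ≤ j := fun j hj => (mem_supported ℂ w).1 (hle hw) hj
  have hsupp := Finsupp.support_nonempty_iff.2 hw0
  set N := w.support.max' hsupp
  have hN : 0 ≤ N := hnonneg N (w.support.max'_mem hsupp)
  have hone : single 0 (1 : ℂ) ∈ W := by
    have := single_one_mem_of_ddt_pow hW hw (n := N) (m := N.toNat)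
      (fun j hj hjN => ⟨hnonneg j hj, by have := w.support.le_max' j hj; omega⟩)
      (Finsupp.mem_support_iff.1 (w.support.max'_mem hsupp))
      (fun h => by have := (descPochhammer_eval_intCast_eq_zero_iff _ _).1 h; omega)
    rwa [Int.toNat_of_nonneg hN, sub_self] at this
  exact supported_le_of_forall_single_one_mem fun n hn => single_one_mem_of_le hW hone hn

theorem eq_top_of_mem_of_apply_ne_zero {w : LP} (hw : w ∈ W) {ν : ℤ} (hν : ν < 0)
    (hwν : w ν ≠ 0) : W = ⊤ := by
  obtain ⟨μ, hμ, hwμ, hmin⟩ : ∃ μ < 0, w μ ≠ 0 ∧ ∀ j ∈ w.support, μ ≤ j :=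
    ⟨_, lt_of_le_of_lt (w.support.min'_le ν (Finsupp.mem_support_iff.2 hwν)) hν,
      Finsupp.mem_support_iff.1 (w.support.min'_mem _), fun j hj => w.support.min'_le j hj⟩
  obtain ⟨B, hB⟩ := w.support.bddAbove
  -- shift the lowest monomial of `w` to `t⁻¹`
  set k := (-1 - μ).toNat
  have hk : (k : ℤ) = -1 - μ := Int.toNat_of_nonneg (by omega)
  have hlow : ∀ m : ℕ, B + k < m → single (-1 - (m : ℤ)) (1 : ℂ) ∈ W := by
    intro m hm
    refine single_one_mem_of_ddt_pow hW (tM_pow_mem hW k hw) (fun j hj hj1 => ?_) ?_ ?_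
    · rw [Finsupp.mem_support_iff, tM_pow_apply] at hj
      have h1 := hmin _ (Finsupp.mem_support_iff.2 hj)
      have h2 := hB (Finsupp.mem_support_iff.2 hj)
      omega
    · rwa [tM_pow_apply, hk, show -1 - (-1 - μ) = μ by ring]
    · intro h
      have := (descPochhammer_eval_intCast_eq_zero_iff _ _).1 (by exact_mod_cast h)
      omega
  rw [eq_top_iff, ← supported_univ (M := ℂ) (R := ℂ)]
  refine supported_le_of_forall_single_one_mem fun n _ => ?_
  set m := (B + k + 1).toNat + (-1 - n).toNat
  exact single_one_mem_of_le hW (hlow m (by omega)) (by omega)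

end Invariant

theorem stmt8 :
    -- `ℂ[t]` is a `D⁻`-submodule of `ℂ[t,t⁻¹]`
    (∀ A ∈ Dminus, polyPart.map A ≤ polyPart) ∧
    -- which is irreducible as a `D⁻`-module
    (∀ W : Submodule ℂ LP, W ≤ polyPart → (∀ A ∈ Dminus, W.map A ≤ W) →
      W = ⊥ ∨ W = polyPart) ∧
    -- and is the maximal proper submodule of `ℂ[t,t⁻¹]`
    (∀ W : Submodule ℂ LP, (∀ A ∈ Dminus, W.map A ≤ W) → W ≠ ⊤ → W ≤ polyPart) := by
  refine ⟨fun A hA => Submodule.map_le_iff_le_comap.2 (Dminus_le_compatibleMaps_polyPart hA),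
    fun W hle hW => ?_, fun W hW hne => ?_⟩
  · rcases eq_or_ne W ⊥ with hbot | hbot
    · exact Or.inl hbot
    · exact Or.inr (le_antisymm hle (polyPart_le_of_le_polyPart_of_ne_bot hW hle hbot))
  · intro w hw
    refine (mem_supported' ℂ w).2 fun μ hμ => ?_
    by_contra hwμ
    exact hne (eq_top_of_mem_of_apply_ne_zero hW hw (not_le.1 hμ) hwμ)
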